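/- Let ξ_d < 0, τ₀ > 0 and β > 0. Define H_d(τ,τ') := −(1/2)|ξ_d|^{−1/2} e^{−|ξ_d|^{1/2}|τ−τ'|} and, for continuous f : [τ₀,∞) → ℝ with sup_{τ ≥ τ₀} τ^β |f(τ)| < ∞, define (𝓗_d f)(τ) := ∫_{τ₀}^∞ H_d(τ,τ') f(τ') dτ'. Then there is a constant C (depending on ξ_d, β, τ₀) such that sup_{τ ≥ τ₀} τ^β |𝓗_d f(τ)| ≤ C sup_{τ ≥ τ₀} τ^β |f(τ)| and sup_{τ ≥ τ₀} τ^β |(𝓗_d f)'(τ)| ≤ C sup_{τ ≥ τ₀} τ^β |f(τ)|. -/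

import Mathlib

/-!
With `μ = |ξ_d|^{1/2}`, `𝓗_d f` is a constant multiple of `∫_{τ₀}^∞ e^{-μ|τ-x|} f(x) dx`, and its
derivative, obtained by differentiating under the integral sign, is bounded by `μ` times the same
integral with `|f|`. Both bounds thus reduce to `τ^β ∫ e^{-μ|τ-x|}|f(x)| dx ≲ sup x^β|f(x)|`.
For this, split the kernel as `e^{-μ|τ-x|/2} e^{-μ|τ-x|/2}`: the first factor turns the weight
`τ^β` into `x^β` (trivially when `x ≥ τ/2`, and because `τ^β e^{-μτ/4}` is bounded when `x < τ/2`),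
and the second has integral at most `4/μ`.
-/

noncomputable section

open Real MeasureTheory

/-- The kernel `H_d(τ,τ') = -(1/2)|ξ_d|^{-1/2}e^{-|ξ_d|^{1/2}|τ-τ'|}`. -/
def Hd (ξd τ τ' : ℝ) : ℝ :=
  -(1 / 2) * |ξd| ^ (-(1 : ℝ) / 2) * Real.exp (-(|ξd| ^ ((1 : ℝ) / 2)) * |τ - τ'|)

/-- The solution operator `(𝓗_d f)(τ) = ∫_{τ₀}^∞ H_d(τ,τ')f(τ')dτ'`. -/
def Hdop (ξd τ₀ : ℝ) (f : ℝ → ℝ) (τ : ℝ) : ℝ :=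
  ∫ τ' in Set.Ioi τ₀, Hd ξd τ τ' * f τ'

open Set

theorem rpow_mul_exp_neg_mul_le {β c t : ℝ} (hβ : 0 < β) (hc : 0 < c) (ht : 0 ≤ t) :
    t ^ β * exp (-c * t) ≤ (β / c) ^ β * exp (-β) := by
  set s := c * t / β with hs_def
  have hs : 0 ≤ s := by positivity
  have hts : t = β / c * s := by rw [hs_def]; field_simp
  have hs_le : s ^ β ≤ exp (c * t - β) := by
    calc s ^ β ≤ exp (s - 1) ^ β := by
          gcongr; linarith [add_one_le_exp (s - 1)]
      _ = exp (c * t - β) := by rw [← exp_mul, hs_def]; congr 1; field_simp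
  calc t ^ β * exp (-c * t) = (β / c) ^ β * (s ^ β * exp (-c * t)) := by
        rw [hts, mul_rpow (by positivity) hs]; ring_nf
    _ ≤ (β / c) ^ β * (exp (c * t - β) * exp (-c * t)) := by gcongr
    _ = (β / c) ^ β * exp (-β) := by rw [← exp_add]; ring_nf

theorem integral_exp_neg_mul_abs {c : ℝ} (hc : 0 < c) : ∫ x, exp (-c * |x|) = 2 / c := by
  rw [integral_comp_abs (f := fun x => exp (-c * x)), integral_exp_mul_Ioi (by linarith)]
  field_simp
  simp

theorem integrable_exp_neg_mul_abs {c : ℝ} (hc : 0 < c) : Integrable fun x => exp (-c * |x|) :=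
  Integrable.of_integral_ne_zero (by rw [integral_exp_neg_mul_abs hc]; positivity)

theorem integrableOn_exp_neg_mul_abs_sub {c : ℝ} (hc : 0 < c) (τ : ℝ) (s : Set ℝ) :
    IntegrableOn (fun x => exp (-c * |τ - x|)) s :=
  ((integrable_exp_neg_mul_abs hc).comp_sub_left τ).integrableOn

theorem setIntegral_exp_neg_mul_abs_sub_le {c : ℝ} (hc : 0 < c) (τ : ℝ) (s : Set ℝ) :
    ∫ x in s, exp (-c * |τ - x|) ≤ 2 / c := by
  calc ∫ x in s, exp (-c * |τ - x|) ≤ ∫ x, exp (-c * |τ - x|) :=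
        setIntegral_le_integral ((integrable_exp_neg_mul_abs hc).comp_sub_left τ)
          (Filter.Eventually.of_forall fun _ => (exp_pos _).le)
    _ = 2 / c := by
        rw [integral_sub_left_eq_self (fun x => exp (-c * |x|)), integral_exp_neg_mul_abs hc]

theorem rpow_mul_exp_neg_mul_abs_sub_le {c τ₀ β τ x : ℝ} (hc : 0 < c) (hτ₀ : 0 < τ₀)
    (hβ : 0 < β) (hτ : 0 ≤ τ) (hx : τ₀ ≤ x) :
    τ ^ β * exp (-c * |τ - x|) ≤ (2 ^ β + (2 * β / (c * τ₀)) ^ β * exp (-β)) * x ^ β := by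
  have hx₀ : 0 < x := hτ₀.trans_le hx
  rcases le_or_gt τ (2 * x) with hnear | hfar
  · have hexp_le_one : exp (-c * |τ - x|) ≤ 1 :=
      exp_le_one_iff.2 (by nlinarith [abs_nonneg (τ - x)])
    calc τ ^ β * exp (-c * |τ - x|) ≤ (2 * x) ^ β * 1 := by gcongr
      _ = 2 ^ β * x ^ β := by rw [mul_one, mul_rpow zero_le_two hx₀.le]
      _ ≤ _ := by gcongr; exact le_add_of_nonneg_right (by positivity)
  · have hdist : c / 2 * τ ≤ c * |τ - x| := by
      rw [abs_of_pos (by linarith)]; nlinarith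
    calc τ ^ β * exp (-c * |τ - x|) ≤ τ ^ β * exp (-(c / 2) * τ) := by
          gcongr τ ^ β * exp ?_; linarith
      _ ≤ (β / (c / 2)) ^ β * exp (-β) := rpow_mul_exp_neg_mul_le hβ (by positivity) hτ
      _ = (2 * β / (c * τ₀)) ^ β * exp (-β) * τ₀ ^ β := by
          rw [mul_right_comm, ← mul_rpow (by positivity) hτ₀.le]; congr 2; field_simp
      _ ≤ (2 * β / (c * τ₀)) ^ β * exp (-β) * x ^ β := by gcongr
      _ ≤ _ := by gcongr; exact le_add_of_nonneg_left (by positivity)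

theorem exists_rpow_mul_setIntegral_exp_neg_mul_abs_sub_le {μ τ₀ β : ℝ} (hμ : 0 < μ)
    (hτ₀ : 0 < τ₀) (hβ : 0 < β) :
    ∃ K, ∀ (f : ℝ → ℝ) (M : ℝ), (∀ x, τ₀ ≤ x → x ^ β * |f x| ≤ M) → ∀ τ, τ₀ ≤ τ →
      τ ^ β * ∫ x in Ioi τ₀, exp (-μ * |τ - x|) * |f x| ≤ K * M := by
  set K₀ := 2 ^ β + (2 * β / (μ / 2 * τ₀)) ^ β * exp (-β)
  refine ⟨K₀ * (4 / μ), fun f M hfM τ hτ => ?_⟩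
  have hτpos : 0 < τ := hτ₀.trans_le hτ
  have hM : 0 ≤ M := (by positivity : 0 ≤ τ₀ ^ β * |f τ₀|).trans (hfM τ₀ le_rfl)
  have hpointwise : ∀ x ∈ Ioi τ₀,
      τ ^ β * (exp (-μ * |τ - x|) * |f x|) ≤ K₀ * M * exp (-(μ / 2) * |τ - x|) := by
    intro x hx
    have hweight := rpow_mul_exp_neg_mul_abs_sub_le (by positivity : 0 < μ / 2) hτ₀ hβ
      hτpos.le (le_of_lt hx)
    have hsplit : exp (-μ * |τ - x|) = exp (-(μ / 2) * |τ - x|) * exp (-(μ / 2) * |τ - x|) := by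
      rw [← exp_add]; ring_nf
    calc τ ^ β * (exp (-μ * |τ - x|) * |f x|)
        = τ ^ β * exp (-(μ / 2) * |τ - x|) * |f x| * exp (-(μ / 2) * |τ - x|) := by
          rw [hsplit]; ring
      _ ≤ K₀ * x ^ β * |f x| * exp (-(μ / 2) * |τ - x|) := by gcongr
      _ ≤ K₀ * M * exp (-(μ / 2) * |τ - x|) := by
          rw [mul_assoc K₀]; gcongr; exact hfM x (le_of_lt hx)
  calc τ ^ β * ∫ x in Ioi τ₀, exp (-μ * |τ - x|) * |f x|
      = ∫ x in Ioi τ₀, τ ^ β * (exp (-μ * |τ - x|) * |f x|) := (integral_const_mul _ _).symm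
    _ ≤ ∫ x in Ioi τ₀, K₀ * M * exp (-(μ / 2) * |τ - x|) :=
        integral_mono_of_nonneg (Filter.Eventually.of_forall fun _ => by positivity)
          ((integrableOn_exp_neg_mul_abs_sub (by positivity) τ _).const_mul _)
          ((ae_restrict_iff' measurableSet_Ioi).2 (Filter.Eventually.of_forall hpointwise))
    _ = K₀ * M * ∫ x in Ioi τ₀, exp (-(μ / 2) * |τ - x|) := integral_const_mul _ _
    _ ≤ K₀ * M * (2 / (μ / 2)) := by
        gcongr; exact setIntegral_exp_neg_mul_abs_sub_le (by positivity) τ _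
    _ = K₀ * (4 / μ) * M := by field_simp; ring

theorem measurable_coe_sign : Measurable fun x : ℝ => (SignType.sign x : ℝ) :=
  Monotone.measurable fun a b hab => by
    rcases lt_trichotomy a 0 with ha | ha | ha <;> rcases lt_trichotomy b 0 with hb | hb | hb <;>
      simp [ha, hb, sign_pos] <;> linarith

theorem dist_exp_neg_mul_abs_sub_le {μ τ a x y : ℝ} (hμ : 0 ≤ μ) (hx : x ∈ Metric.ball τ 1)
    (hy : y ∈ Metric.ball τ 1) :
    dist (exp (-μ * |x - a|)) (exp (-μ * |y - a|))
      ≤ μ * exp μ * exp (-μ * |τ - a|) * dist x y := by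
  have one_sided : ∀ x ∈ Metric.ball τ 1, ∀ y,
      exp (-μ * |x - a|) - exp (-μ * |y - a|) ≤ μ * exp μ * exp (-μ * |τ - a|) * dist x y := by
    intro x hx y
    rw [Metric.mem_ball, dist_comm, Real.dist_eq] at hx
    -- convexity of `exp`: `exp u * (1 + (v - u)) ≤ exp v`
    have htangent : exp (-μ * |x - a|) - exp (-μ * |y - a|)
        ≤ exp (-μ * |x - a|) * (-μ * |x - a| - -μ * |y - a|) := by
      have := mul_le_mul_of_nonneg_left (add_one_le_exp (-μ * |y - a| - -μ * |x - a|))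
        (exp_pos (-μ * |x - a|)).le
      rw [← exp_add, add_sub_cancel] at this
      linarith
    have hdiff : -μ * |x - a| - -μ * |y - a| ≤ μ * dist x y := by
      have := abs_sub_abs_le_abs_sub (y - a) (x - a)
      rw [sub_sub_sub_cancel_right, abs_sub_comm y x] at this
      have := mul_le_mul_of_nonneg_left this hμ
      rw [Real.dist_eq]; linarith
    have hexp : exp (-μ * |x - a|) ≤ exp μ * exp (-μ * |τ - a|) := by
      rw [← exp_add, exp_le_exp]
      have := abs_sub_le τ x a
      nlinarith
    calc exp (-μ * |x - a|) - exp (-μ * |y - a|)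
        ≤ exp (-μ * |x - a|) * (μ * dist x y) :=
          htangent.trans (mul_le_mul_of_nonneg_left hdiff (exp_pos _).le)
      _ ≤ exp μ * exp (-μ * |τ - a|) * (μ * dist x y) := by gcongr
      _ = μ * exp μ * exp (-μ * |τ - a|) * dist x y := by ring
  rw [Real.dist_eq, abs_sub_le_iff]
  exact ⟨one_sided x hx y, dist_comm x y ▸ one_sided y hy x⟩

theorem hasDerivAt_exp_neg_mul_abs_sub {μ t a : ℝ} (h : t ≠ a) :
    HasDerivAt (fun t => exp (-μ * |t - a|)) (-μ * SignType.sign (t - a) * exp (-μ * |t - a|)) t := by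
  have habs : HasDerivAt (fun t => |t - a|) (SignType.sign (t - a) : ℝ) t :=
    (hasDerivAt_abs (sub_ne_zero.2 h)).comp_sub_const t a
  exact (habs.const_mul (-μ)).exp.congr_deriv (by ring)

theorem hasDerivAt_setIntegral_exp_neg_mul_abs_sub_mul {μ τ : ℝ} {s : Set ℝ} {f : ℝ → ℝ}
    (hμ : 0 ≤ μ) (hf : AEStronglyMeasurable f (volume.restrict s))
    (hint : IntegrableOn (fun x => exp (-μ * |τ - x|) * f x) s) :
    HasDerivAt (fun t => ∫ x in s, exp (-μ * |t - x|) * f x)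
      (∫ x in s, -μ * SignType.sign (τ - x) * exp (-μ * |τ - x|) * f x) τ := by
  have hlip : ∀ a, LipschitzOnWith (Real.nnabs (μ * exp μ * ‖exp (-μ * |τ - a|) * f a‖))
      (fun t => exp (-μ * |t - a|) * f a) (Metric.ball τ 1) := by
    intro a
    rw [Real.nnabs_of_nonneg (by positivity)]
    refine LipschitzOnWith.of_dist_le' fun x hx y hy => ?_
    rw [Real.dist_eq, ← sub_mul, abs_mul, ← Real.dist_eq, norm_mul, Real.norm_eq_abs,
      Real.norm_eq_abs, abs_of_pos (exp_pos _)]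
    calc dist (exp (-μ * |x - a|)) (exp (-μ * |y - a|)) * |f a|
        ≤ μ * exp μ * exp (-μ * |τ - a|) * dist x y * |f a| := by
          gcongr; exact dist_exp_neg_mul_abs_sub_le hμ hx hy
      _ = μ * exp μ * (exp (-μ * |τ - a|) * |f a|) * dist x y := by ring
  have hderiv : ∀ᵐ a ∂volume.restrict s, HasDerivAt (fun t => exp (-μ * |t - a|) * f a)
      (-μ * SignType.sign (τ - a) * exp (-μ * |τ - a|) * f a) τ :=
    ae_restrict_of_ae ((Measure.ae_ne volume τ).mono fun a ha =>
      (hasDerivAt_exp_neg_mul_abs_sub ha.symm).mul_const (f a))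
  refine (hasDerivAt_integral_of_dominated_loc_of_lip (F := fun t x => exp (-μ * |t - x|) * f x)
    (Metric.ball_mem_nhds τ one_pos)
    (Filter.Eventually.of_forall fun t => ?_) hint ?_ (Filter.Eventually.of_forall hlip)
    (hint.norm.const_mul _) hderiv).2
  · exact (by fun_prop : Continuous fun x => exp (-μ * |t - x|)).aestronglyMeasurable.mul hf
  · exact ((((measurable_coe_sign.comp (measurable_const.sub measurable_id)).const_mul
      (-μ)).aestronglyMeasurable).mul
      (by fun_prop : Continuous fun x => exp (-μ * |τ - x|)).aestronglyMeasurable).mul hf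

theorem abs_deriv_setIntegral_exp_neg_mul_abs_sub_mul_le {μ τ : ℝ} {s : Set ℝ} {f : ℝ → ℝ}
    (hμ : 0 ≤ μ) (hf : AEStronglyMeasurable f (volume.restrict s))
    (hint : IntegrableOn (fun x => exp (-μ * |τ - x|) * f x) s) :
    |deriv (fun t => ∫ x in s, exp (-μ * |t - x|) * f x) τ|
      ≤ μ * ∫ x in s, exp (-μ * |τ - x|) * |f x| := by
  rw [(hasDerivAt_setIntegral_exp_neg_mul_abs_sub_mul hμ hf hint).deriv, ← integral_const_mul,
    ← Real.norm_eq_abs]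
  have hint_abs : Integrable (fun x => exp (-μ * |τ - x|) * |f x|) (volume.restrict s) := by
    simpa only [norm_mul, Real.norm_eq_abs, abs_of_pos (exp_pos _)] using hint.norm
  refine norm_integral_le_of_norm_le (hint_abs.const_mul μ)
    (Filter.Eventually.of_forall fun x => ?_)
  have hsign : |(SignType.sign (τ - x) : ℝ)| ≤ 1 := by
    rcases lt_trichotomy (τ - x) 0 with h | h | h <;> simp [h, sign_pos]
  simp only [norm_mul, norm_neg, Real.norm_eq_abs, abs_of_pos (exp_pos _), abs_of_nonneg hμ]
  calc μ * |(SignType.sign (τ - x) : ℝ)| * exp (-μ * |τ - x|) * |f x|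
      ≤ μ * 1 * exp (-μ * |τ - x|) * |f x| := by gcongr
    _ = μ * (exp (-μ * |τ - x|) * |f x|) := by ring

theorem exists_rpow_mul_abs_setIntegral_exp_neg_mul_abs_sub_mul_le {μ τ₀ β : ℝ} (hμ : 0 < μ)
    (hτ₀ : 0 < τ₀) (hβ : 0 < β) :
    ∃ K, ∀ f : ℝ → ℝ, ContinuousOn f (Ici τ₀) → ∀ M, (∀ x, τ₀ ≤ x → x ^ β * |f x| ≤ M) →
      ∀ τ, τ₀ ≤ τ →
        τ ^ β * |∫ x in Ioi τ₀, exp (-μ * |τ - x|) * f x| ≤ K * M ∧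
        τ ^ β * |deriv (fun t => ∫ x in Ioi τ₀, exp (-μ * |t - x|) * f x) τ| ≤ K * M := by
  obtain ⟨K, hK⟩ := exists_rpow_mul_setIntegral_exp_neg_mul_abs_sub_le hμ hτ₀ hβ
  refine ⟨(1 + μ) * K, fun f hf M hfM τ hτ => ?_⟩
  have hτpos : 0 < τ := hτ₀.trans_le hτ
  set I := ∫ x in Ioi τ₀, exp (-μ * |τ - x|) * |f x|
  have hI : τ ^ β * I ≤ K * M := hK f M hfM τ hτ
  have hKM : 0 ≤ K * M := (mul_nonneg (by positivity)
    (setIntegral_nonneg measurableSet_Ioi fun x _ => by positivity)).trans hI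
  have hmeas : AEStronglyMeasurable f (volume.restrict (Ioi τ₀)) :=
    (hf.mono Ioi_subset_Ici_self).aestronglyMeasurable measurableSet_Ioi
  have hbdd : ∀ x ∈ Ioi τ₀, ‖f x‖ ≤ M / τ₀ ^ β := fun x hx => by
    rw [Real.norm_eq_abs, le_div_iff₀' (by positivity)]
    exact (mul_le_mul_of_nonneg_right (rpow_le_rpow hτ₀.le (le_of_lt hx) hβ.le)
      (abs_nonneg _)).trans (hfM x (le_of_lt hx))
  have hint : IntegrableOn (fun x => exp (-μ * |τ - x|) * f x) (Ioi τ₀) :=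
    (integrableOn_exp_neg_mul_abs_sub hμ τ _).mul_bdd hmeas
      ((ae_restrict_iff' measurableSet_Ioi).2 (Filter.Eventually.of_forall hbdd))
  have hvalue : |∫ x in Ioi τ₀, exp (-μ * |τ - x|) * f x| ≤ I := by
    rw [← Real.norm_eq_abs]
    refine (norm_integral_le_integral_norm _).trans_eq (integral_congr_ae ?_)
    exact Filter.Eventually.of_forall fun x => by
      simp only [norm_mul, Real.norm_eq_abs, abs_of_pos (exp_pos _)]
  have hderiv := abs_deriv_setIntegral_exp_neg_mul_abs_sub_mul_le hμ.le hmeas hint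
  constructor
  · calc τ ^ β * |∫ x in Ioi τ₀, exp (-μ * |τ - x|) * f x| ≤ τ ^ β * I := by gcongr
      _ ≤ K * M := hI
      _ ≤ (1 + μ) * K * M := by nlinarith
  · calc τ ^ β * |deriv (fun t => ∫ x in Ioi τ₀, exp (-μ * |t - x|) * f x) τ|
        ≤ τ ^ β * (μ * I) := by gcongr
      _ = μ * (τ ^ β * I) := by ring
      _ ≤ μ * (K * M) := by gcongr
      _ ≤ (1 + μ) * K * M := by nlinarith

theorem Hdop_eq (ξd τ₀ : ℝ) (f : ℝ → ℝ) :
    Hdop ξd τ₀ f = fun τ => -(1 / 2 * |ξd| ^ (-(1 : ℝ) / 2)) *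
      ∫ x in Ioi τ₀, exp (-(|ξd| ^ ((1 : ℝ) / 2)) * |τ - x|) * f x := by
  funext τ
  rw [Hdop, ← integral_const_mul]
  congr 1 with x
  rw [Hd]
  ring

/-- **Lemma 3.11**: the solution operator `𝓗_d` for the discrete mode preserves
polynomial decay: `sup τ^β|𝓗_d f| ≲ sup τ^β|f|` and `sup τ^β|(𝓗_d f)'| ≲ sup τ^β|f|`. -/
theorem discrete_mode_operator_bounds (ξd τ₀ β : ℝ)
    (hξd : ξd < 0) (hτ₀ : 0 < τ₀) (hβ : 0 < β) :
    ∃ C : ℝ, ∀ f : ℝ → ℝ, ContinuousOn f (Set.Ici τ₀) →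
      ∀ M : ℝ, (∀ τ : ℝ, τ₀ ≤ τ → τ ^ β * |f τ| ≤ M) →
        (∀ τ : ℝ, τ₀ ≤ τ → τ ^ β * |Hdop ξd τ₀ f τ| ≤ C * M) ∧
        (∀ τ : ℝ, τ₀ ≤ τ → τ ^ β * |deriv (Hdop ξd τ₀ f) τ| ≤ C * M) := by
  obtain ⟨K, hK⟩ := exists_rpow_mul_abs_setIntegral_exp_neg_mul_abs_sub_mul_le
    (rpow_pos_of_pos (abs_pos.2 hξd.ne) ((1 : ℝ) / 2)) hτ₀ hβ
  refine ⟨1 / 2 * |ξd| ^ (-(1 : ℝ) / 2) * K, fun f hf M hfM => ?_⟩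
  have hA : 0 ≤ 1 / 2 * |ξd| ^ (-(1 : ℝ) / 2) := by positivity
  rw [Hdop_eq]
  refine ⟨fun τ hτ => ?_, fun τ hτ => ?_⟩
  · rw [abs_mul, abs_neg, abs_of_nonneg hA]
    linarith [mul_le_mul_of_nonneg_left (hK f hf M hfM τ hτ).1 hA]
  · rw [deriv_const_mul_field', abs_mul, abs_neg, abs_of_nonneg hA]
    linarith [mul_le_mul_of_nonneg_left (hK f hf M hfM τ hτ).2 hA]

end
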